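/- Let G be a bipartite graph with bipartition V₁ ∪ V₂. There exists a nonempty set D₀ entirely contained in V₁ or entirely contained in V₂ such that |D₀ ∪ Odd(D₀)| = δ_loc(G) + 1, i.e., D₀ achieves the minimum in the characterization of the local minimum degree. -/

import Mathlib

/-!
Take any nonempty `D` attaining the minimum and a part `Vᵢ` that meets it. A vertex with an odd
number of neighbours in `D ∩ Vᵢ` lies in the other part, so all its neighbours lie in `Vᵢ` and it
is already odd for `D`. Hence `(D ∩ Vᵢ) ∪ Odd(D ∩ Vᵢ) ⊆ D ∪ Odd(D)`, and `D ∩ Vᵢ` attains the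
minimum as well.
-/

/-- Odd neighborhood. -/
def oddNbhd {V : Type*} (G : SimpleGraph V) (D : Set V) : Set V :=
  {v | Odd ((G.neighborSet v ∩ D).ncard)}

/-- Local minimum degree: `min{ |D ∪ Odd(D)| : ∅ ≠ D ⊆ V } − 1`. -/
noncomputable def deltaLoc {V : Type*} (G : SimpleGraph V) : ℕ :=
  sInf {k : ℕ | ∃ D : Set V, D.Nonempty ∧ (D ∪ oddNbhd G D).ncard = k} - 1

namespace SimpleGraph

variable {V : Type*} (G : SimpleGraph V)

theorem deltaLoc_add_one_le [Finite V] {E : Set V} (hE : E.Nonempty) :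
    deltaLoc G + 1 ≤ (E ∪ oddNbhd G E).ncard := by
  have hpos : 0 < (E ∪ oddNbhd G E).ncard :=
    (Set.ncard_pos (Set.toFinite _)).mpr (hE.mono Set.subset_union_left)
  have hle : sInf {k : ℕ | ∃ D : Set V, D.Nonempty ∧ (D ∪ oddNbhd G D).ncard = k} ≤
      (E ∪ oddNbhd G E).ncard :=
    Nat.sInf_le ⟨E, hE, rfl⟩
  unfold deltaLoc
  omega

theorem exists_ncard_eq_deltaLoc_add_one [Finite V] [Nonempty V] :
    ∃ D : Set V, D.Nonempty ∧ (D ∪ oddNbhd G D).ncard = deltaLoc G + 1 := by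
  obtain ⟨D, hD, hcard⟩ := Nat.sInf_mem
    (s := {k : ℕ | ∃ D : Set V, D.Nonempty ∧ (D ∪ oddNbhd G D).ncard = k})
    ⟨_, Set.univ, Set.univ_nonempty, rfl⟩
  refine ⟨D, hD, le_antisymm ?_ (deltaLoc_add_one_le G hD)⟩
  unfold deltaLoc
  omega

variable {G}

theorem oddNbhd_inter_subset {A : Set V}
    (hA : ∀ ⦃v w u⦄, G.Adj v w → G.Adj v u → w ∈ A → u ∈ A) (D : Set V) :
    oddNbhd G (D ∩ A) ⊆ oddNbhd G D := by
  intro v hv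
  obtain ⟨w, hvw, -, hwA⟩ : (G.neighborSet v ∩ (D ∩ A)).Nonempty :=
    Set.nonempty_of_ncard_ne_zero fun h => by simp [oddNbhd, h] at hv
  have hN : G.neighborSet v ∩ D = G.neighborSet v ∩ (D ∩ A) := by
    ext u
    exact ⟨fun ⟨hvu, huD⟩ => ⟨hvu, huD, hA hvw hvu hwA⟩, fun ⟨hvu, huD, _⟩ => ⟨hvu, huD⟩⟩
  simpa [oddNbhd, hN] using hv

theorem ncard_inter_eq_deltaLoc_add_one [Finite V] {A D : Set V}
    (hA : ∀ ⦃v w u⦄, G.Adj v w → G.Adj v u → w ∈ A → u ∈ A)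
    (hD : (D ∪ oddNbhd G D).ncard = deltaLoc G + 1) (hDA : (D ∩ A).Nonempty) :
    (D ∩ A ∪ oddNbhd G (D ∩ A)).ncard = deltaLoc G + 1 := by
  refine le_antisymm ?_ (deltaLoc_add_one_le G hDA)
  rw [← hD]
  exact Set.ncard_le_ncard
    (Set.union_subset_union Set.inter_subset_left (oddNbhd_inter_subset hA D))

theorem mem_of_adj_of_adj_of_bipartition {V₁ V₂ : Set V} (hdisj : V₁ ∩ V₂ = ∅)
    (hbip : ∀ v w, G.Adj v w → (v ∈ V₁ ∧ w ∈ V₂) ∨ (v ∈ V₂ ∧ w ∈ V₁))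
    ⦃v w u : V⦄ (hvw : G.Adj v w) (hvu : G.Adj v u) (hw : w ∈ V₁) : u ∈ V₁ := by
  have hdisj' : ∀ x ∈ V₁, x ∉ V₂ := fun _ h₁ h₂ => hdisj.subset ⟨h₁, h₂⟩
  rcases hbip v w hvw with ⟨-, hw₂⟩ | ⟨hv₂, -⟩
  · exact absurd hw₂ (hdisj' w hw)
  · rcases hbip v u hvu with ⟨hv₁, -⟩ | ⟨-, hu₁⟩
    · exact absurd hv₂ (hdisj' v hv₁)
    · exact hu₁

end SimpleGraph

open SimpleGraph in
theorem bipartite_deltaLoc_achieved {V : Type*} [Fintype V] [Nonempty V]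
    (G : SimpleGraph V) (V₁ V₂ : Set V)
    (hcover : V₁ ∪ V₂ = Set.univ) (hdisj : V₁ ∩ V₂ = ∅)
    (hbip : ∀ v w, G.Adj v w → (v ∈ V₁ ∧ w ∈ V₂) ∨ (v ∈ V₂ ∧ w ∈ V₁)) :
    ∃ D₀ : Set V, D₀.Nonempty ∧ (D₀ ⊆ V₁ ∨ D₀ ⊆ V₂) ∧
      (D₀ ∪ oddNbhd G D₀).ncard = deltaLoc G + 1 := by
  obtain ⟨D, ⟨x, hx⟩, hD⟩ := exists_ncard_eq_deltaLoc_add_one G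
  have hx₁₂ : x ∈ V₁ ∪ V₂ := hcover ▸ Set.mem_univ x
  rcases hx₁₂ with hx₁ | hx₂
  · exact ⟨D ∩ V₁, ⟨x, hx, hx₁⟩, Or.inl Set.inter_subset_right,
      ncard_inter_eq_deltaLoc_add_one (mem_of_adj_of_adj_of_bipartition hdisj hbip) hD
        ⟨x, hx, hx₁⟩⟩
  · have hdisj' : V₂ ∩ V₁ = ∅ := Set.inter_comm V₁ V₂ ▸ hdisj
    have hbip' : ∀ v w, G.Adj v w → (v ∈ V₂ ∧ w ∈ V₁) ∨ (v ∈ V₁ ∧ w ∈ V₂) :=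
      fun v w h => (hbip v w h).symm
    exact ⟨D ∩ V₂, ⟨x, hx, hx₂⟩, Or.inr Set.inter_subset_right,
      ncard_inter_eq_deltaLoc_add_one (mem_of_adj_of_adj_of_bipartition hdisj' hbip') hD
        ⟨x, hx, hx₂⟩⟩
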